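/- (Proposition 2.1.) Let K : (T ∪ {t₀}) × (T ∪ {t₀}) → ℝ be a symmetric measurable kernel with nonnegative quadratic form on finite signed measures on T, f : T ∪ {t₀} → ℝ^m, t₀ ∉ T. Suppose there exist a finite signed measure ζ_{t₀} on T with ∫_T K(t,s) ζ_{t₀}(dt) = K(t₀,s) for all s ∈ T, and an m-tuple ζ = (ζ₁,…,ζ_m) of finite signed measures on T with ∫_T K(t,s) ζ(dt) = f(s) (componentwise) for all s ∈ T, and that the m×m matrix C with entries C_{ij} = ∫_T f_i(t) ζ_j(dt) is invertible. Set c = f(t₀) − ∫_T f(t) ζ_{t₀}(dt) and Q* = ζ_{t₀} + Σ_j (C⁻¹ᵀ c)_j ζ_j (i.e., Q*(dt) = ζ_{t₀}(dt) + cᵀ C⁻¹ ζ(dt)). Then for every finite signed measure Q on T with ∫_T f dQ = f(t₀) one has M(Q) ≥ M(Q*), where M(Q) = K(t₀,t₀) − 2∫_T K(t,t₀) Q(dt) + ∬_{T×T} K(t,s) Q(dt)Q(ds). -/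

import Mathlib

open MeasureTheory

/-- Integral of a real function against a finite signed measure, via the Jordan
decomposition. -/
noncomputable def sInt {α : Type*} [MeasurableSpace α] (μ : SignedMeasure α) (g : α → ℝ) : ℝ :=
  (∫ x, g x ∂μ.toJordanDecomposition.posPart) - ∫ x, g x ∂μ.toJordanDecomposition.negPart

/-! Put `R = Q - Q*` and `B(P, R) = ∬ K dP dR`. As `B` is symmetric and `B(R, R) ≥ 0`,
`M(Q) - M(Q*) = 2 (B(R, Q*) - ∫ K(·, t₀) dR) + B(R, R)`, so it suffices that the cross term
vanishes. The defining equations of `ζ_{t₀}` and `ζ` give `B(R, Q*) = ∫ K(·, t₀) dR + aᵀ ∫ f dR`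
with `a = C⁻ᵀ c`, and unbiasedness of `Q` gives `∫ f dR = c - C a`. Although `Q*` itself need not
be unbiased, `aᵀ (c - C a) = cᵀ C⁻¹ c - cᵀ C⁻¹ c = 0`. -/

section

variable {α β : Type*} [MeasurableSpace α] [MeasurableSpace β]

def IntegrableFinite (g : α → ℝ) : Prop :=
  ∀ (μ : Measure α) [IsFiniteMeasure μ], Integrable g μ

lemma integrableFinite_of_bound {g : α → ℝ} (hg : Measurable g) {C : ℝ} (hC : ∀ x, |g x| ≤ C) :
    IntegrableFinite g := fun _ _ =>
  .of_bound hg.aestronglyMeasurable C (.of_forall hC)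

lemma sInt_eq_integral_sub_integral {P : SignedMeasure α} {μ ν : Measure α}
    [IsFiniteMeasure μ] [IsFiniteMeasure ν] (hP : P = μ.toSignedMeasure - ν.toSignedMeasure)
    {g : α → ℝ} (hg : IntegrableFinite g) :
    sInt P g = (∫ x, g x ∂μ) - ∫ x, g x ∂ν := by
  set j := P.toJordanDecomposition
  have hj : j.posPart.toSignedMeasure - j.negPart.toSignedMeasure
      = μ.toSignedMeasure - ν.toSignedMeasure :=
    P.toSignedMeasure_toJordanDecomposition.trans hP
  have hmeas : j.posPart + ν = μ + j.negPart := by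
    rw [← Measure.toSignedMeasure_eq_toSignedMeasure_iff, Measure.toSignedMeasure_add,
      Measure.toSignedMeasure_add, ← sub_eq_sub_iff_add_eq_add, hj]
  have hint := congrArg (fun ρ => ∫ x, g x ∂ρ) hmeas
  simp only [integral_add_measure (hg _) (hg _)] at hint
  unfold sInt
  linarith

lemma sInt_add_measure {g : α → ℝ} (hg : IntegrableFinite g) (P R : SignedMeasure α) :
    sInt (P + R) g = sInt P g + sInt R g := by
  set p := P.toJordanDecomposition
  set r := R.toJordanDecomposition
  have hPR : P + R = (p.posPart + r.posPart).toSignedMeasure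
      - (p.negPart + r.negPart).toSignedMeasure := by
    rw [Measure.toSignedMeasure_add, Measure.toSignedMeasure_add,
      ← P.toSignedMeasure_toJordanDecomposition, ← R.toSignedMeasure_toJordanDecomposition]
    simp only [JordanDecomposition.toSignedMeasure]
    abel
  rw [sInt_eq_integral_sub_integral hPR hg, integral_add_measure (hg _) (hg _),
    integral_add_measure (hg _) (hg _)]
  unfold sInt
  ring

lemma sInt_smul_measure (r : ℝ) (P : SignedMeasure α) (g : α → ℝ) :
    sInt (r • P) g = r * sInt P g := by
  unfold sInt
  rw [SignedMeasure.toJordanDecomposition_smul_real]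
  rcases le_or_gt 0 r with hr | hr
  · rw [JordanDecomposition.real_smul_posPart_nonneg _ _ hr,
      JordanDecomposition.real_smul_negPart_nonneg _ _ hr, integral_smul_nnreal_measure,
      integral_smul_nnreal_measure, NNReal.smul_def, NNReal.smul_def, Real.coe_toNNReal _ hr,
      smul_eq_mul, smul_eq_mul]
    ring
  · rw [JordanDecomposition.real_smul_posPart_neg _ _ hr,
      JordanDecomposition.real_smul_negPart_neg _ _ hr, integral_smul_nnreal_measure,
      integral_smul_nnreal_measure, NNReal.smul_def, NNReal.smul_def,
      Real.coe_toNNReal _ (neg_nonneg.mpr hr.le), smul_eq_mul, smul_eq_mul]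
    ring

noncomputable def sIntₗ (g : α → ℝ) (hg : IntegrableFinite g) : SignedMeasure α →ₗ[ℝ] ℝ where
  toFun P := sInt P g
  map_add' := sInt_add_measure hg
  map_smul' r P := sInt_smul_measure r P g

lemma sInt_add (P : SignedMeasure α) {g h : α → ℝ} (hg : IntegrableFinite g)
    (hh : IntegrableFinite h) : sInt P (fun x => g x + h x) = sInt P g + sInt P h := by
  unfold sInt
  rw [integral_add (hg _) (hh _), integral_add (hg _) (hh _)]
  ring

lemma sInt_const_mul (P : SignedMeasure α) (r : ℝ) (g : α → ℝ) :
    sInt P (fun x => r * g x) = r * sInt P g := by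
  unfold sInt
  rw [integral_const_mul, integral_const_mul]
  ring

variable {H : α → β → ℝ}

lemma integrableFinite_integral_right (hH : Measurable (Function.uncurry H))
    (hb : ∃ C, ∀ x y, |H x y| ≤ C) (ν : Measure β) [IsFiniteMeasure ν] :
    IntegrableFinite fun x => ∫ y, H x y ∂ν := by
  obtain ⟨C, hC⟩ := hb
  refine integrableFinite_of_bound hH.stronglyMeasurable.integral_prod_right.measurable
    (C := C * ν.real Set.univ) fun x => ?_
  simpa only [Real.norm_eq_abs] using
    norm_integral_le_of_norm_le_const (μ := ν) (f := H x) (.of_forall fun y => hC x y)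

lemma integrableFinite_sInt_right (hH : Measurable (Function.uncurry H))
    (hb : ∃ C, ∀ x y, |H x y| ≤ C) (R : SignedMeasure β) :
    IntegrableFinite fun x => sInt R (H x) := fun μ _ =>
  (integrableFinite_integral_right hH hb _ μ).sub (integrableFinite_integral_right hH hb _ μ)

lemma sInt_sInt_swap (hH : Measurable (Function.uncurry H)) (hb : ∃ C, ∀ x y, |H x y| ≤ C)
    (P : SignedMeasure α) (R : SignedMeasure β) :
    sInt P (fun x => sInt R (H x)) = sInt R (fun y => sInt P fun x => H x y) := by
  have hH' : Measurable (Function.uncurry fun y x => H x y) := hH.comp measurable_swap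
  have hb' : ∃ C, ∀ y x, |H x y| ≤ C := hb.imp fun C hC y x => hC x y
  obtain ⟨C, hC⟩ := id hb
  have hswap : ∀ (μ : Measure α) (ν : Measure β) [IsFiniteMeasure μ] [IsFiniteMeasure ν],
      ∫ x, ∫ y, H x y ∂ν ∂μ = ∫ y, ∫ x, H x y ∂μ ∂ν := fun μ ν _ _ =>
    integral_integral_swap (integrableFinite_of_bound hH (fun p => hC p.1 p.2) _)
  unfold sInt
  simp only [integral_sub (integrableFinite_integral_right hH hb _ _)
    (integrableFinite_integral_right hH hb _ _),
    integral_sub (integrableFinite_integral_right hH' hb' _ _)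
    (integrableFinite_integral_right hH' hb' _ _), hswap]
  ring

end

section

variable {α : Type*} [MeasurableSpace α]

noncomputable def kernelForm (H : α → α → ℝ) (hH : Measurable (Function.uncurry H))
    (hb : ∃ C, ∀ x y, |H x y| ≤ C) : LinearMap.BilinForm ℝ (SignedMeasure α) :=
  LinearMap.mk₂ ℝ (fun P R => sInt P fun x => sInt R (H x))
    (fun _ _ R => sInt_add_measure (integrableFinite_sInt_right hH hb R) _ _)
    (fun r P _ => sInt_smul_measure r P _)
    (fun P R₁ R₂ => by
      obtain ⟨C, hC⟩ := hb
      have hHx : ∀ x, IntegrableFinite (H x) := fun x =>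
        integrableFinite_of_bound hH.of_uncurry_left (hC x)
      simp only [sInt_add_measure (hHx _)]
      exact sInt_add P (integrableFinite_sInt_right hH ⟨C, hC⟩ R₁)
        (integrableFinite_sInt_right hH ⟨C, hC⟩ R₂))
    (fun r P R => by
      simp only [sInt_smul_measure]
      exact sInt_const_mul P r _)

variable {H : α → α → ℝ} (hH : Measurable (Function.uncurry H))
  (hb : ∃ C, ∀ x y, |H x y| ≤ C)

lemma kernelForm_apply (P R : SignedMeasure α) :
    kernelForm H hH hb P R = sInt P fun x => sInt R (H x) :=
  rfl

lemma kernelForm_isSymm (hsymm : ∀ x y, H x y = H y x) : (kernelForm H hH hb).IsSymm := by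
  refine ⟨fun P R => ?_⟩
  rw [kernelForm_apply hH hb, kernelForm_apply hH hb, sInt_sInt_swap hH hb]
  congr 1 with y
  congr 1 with x
  exact hsymm x y

lemma kernelForm_apply_eq_sInt (hsymm : ∀ x y, H x y = H y x) {ζ : SignedMeasure α} {g : α → ℝ}
    (hζ : ∀ y, sInt ζ (fun x => H x y) = g y) (R : SignedMeasure α) :
    kernelForm H hH hb R ζ = sInt R g := by
  rw [kernelForm_apply hH hb]
  congr 1 with x
  rw [← hζ x]
  congr 1 with y
  exact hsymm x y

end

theorem LinearMap.BilinForm.IsSymm.apply_self_sub_two_mul_le {M : Type*} [AddCommGroup M]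
    [Module ℝ M] {B : LinearMap.BilinForm ℝ M} (hB : B.IsSymm) (L : M →ₗ[ℝ] ℝ) {P Q : M}
    (hpos : 0 ≤ B (Q - P) (Q - P)) (horth : B (Q - P) P = L (Q - P)) :
    B P P - 2 * L P ≤ B Q Q - 2 * L Q := by
  obtain ⟨R, rfl⟩ : ∃ R, Q = P + R := ⟨Q - P, by abel⟩
  rw [add_sub_cancel_left] at hpos horth
  have hexpand : B (P + R) (P + R) = B P P + 2 * B R P + B R R := by
    simp only [map_add, LinearMap.add_apply, hB.eq P R]
    ring
  rw [hexpand, map_add]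
  linarith

open Matrix in
theorem Matrix.vecMul_inv_dotProduct_sub_mulVec {n R : Type*} [Fintype n] [DecidableEq n]
    [CommRing R] {C : Matrix n n R} (hC : IsUnit C.det) (c : n → R) :
    (c ᵥ* C⁻¹) ⬝ᵥ (c - C *ᵥ (c ᵥ* C⁻¹)) = 0 := by
  rw [dotProduct_sub, dotProduct_mulVec, vecMul_vecMul, nonsing_inv_mul _ hC, vecMul_one,
    dotProduct_comm, sub_self]

open Matrix in
theorem blup_orthogonality {E n : Type*} [AddCommGroup E] [Module ℝ E] [Fintype n]
    [DecidableEq n] (B : LinearMap.BilinForm ℝ E) (L : E →ₗ[ℝ] ℝ) (F : n → E →ₗ[ℝ] ℝ)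
    {ζ₀ : E} {ζ : n → E} (hBζ₀ : ∀ R, B R ζ₀ = L R) (hBζ : ∀ R j, B R (ζ j) = F j R)
    {C : Matrix n n ℝ} (hC : ∀ i j, F i (ζ j) = C i j) (hCinv : IsUnit C.det) {c : n → ℝ}
    {Q Qstar : E} (hQ : ∀ i, F i Q = F i ζ₀ + c i)
    (hQstar : Qstar = ζ₀ + ∑ j, (c ᵥ* C⁻¹) j • ζ j) :
    B (Q - Qstar) Qstar = L (Q - Qstar) := by
  set a := c ᵥ* C⁻¹
  set R := Q - Qstar with hR
  have hFR : ∀ i, F i R = (c - C *ᵥ a) i := fun i => by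
    simp only [hR, hQstar, map_sub, map_add, map_sum, map_smul, hQ, hC, smul_eq_mul,
      Pi.sub_apply, mulVec, dotProduct, mul_comm (a _)]
    ring
  rw [hQstar, map_add, map_sum, hBζ₀, add_eq_left]
  simp only [map_smul, hBζ, hFR, smul_eq_mul]
  exact vecMul_inv_dotProduct_sub_mulVec hCinv c

theorem blup_point_optimality_via_C_general {d m : ℕ}
    (T : Set (Fin d → ℝ))
    (t0 : Fin d → ℝ)
    (K : (Fin d → ℝ) → (Fin d → ℝ) → ℝ)
    (hKmeas : Measurable (Function.uncurry K))
    (hKbd : ∃ C, ∀ t s, |K t s| ≤ C)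
    (hKsym : ∀ t s, K t s = K s t)
    (hKpos : ∀ R : SignedMeasure T, 0 ≤ sInt R fun t => sInt R fun s => K t.1 s.1)
    (f : (Fin d → ℝ) → Fin m → ℝ)
    (hfmeas : ∀ i, Measurable fun t => f t i)
    (hfbd : ∃ C, ∀ t i, |f t i| ≤ C)
    -- the measure `ζ_{t₀}` solving `∫_T K(t,s) ζ_{t₀}(dt) = K(t₀,s)`:
    (ζt0 : SignedMeasure T)
    (hζt0 : ∀ s : T, sInt ζt0 (fun t => K t.1 s.1) = K t0 s.1)
    -- the vector measure `ζ` solving `∫_T K(t,s) ζ(dt) = f(s)` componentwise: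
    (ζ : Fin m → SignedMeasure T)
    (hζ : ∀ (s : T) (j : Fin m), sInt (ζ j) (fun t => K t.1 s.1) = f s.1 j)
    -- the matrix `C` with entries `C_{ij} = ∫_T f_i dζ_j`, assumed invertible:
    (C : Matrix (Fin m) (Fin m) ℝ)
    (hC : ∀ i j, C i j = sInt (ζ j) fun t => f t.1 i)
    (hCinv : IsUnit C.det)
    (c : Fin m → ℝ)
    (hc : ∀ i, c i = f t0 i - sInt ζt0 fun t => f t.1 i)
    (Qstar : SignedMeasure T)
    (hQstar : Qstar = ζt0 + ∑ j, (∑ i, c i * C⁻¹ i j) • ζ j)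
    (M : SignedMeasure T → ℝ)
    (hM : ∀ Q : SignedMeasure T,
      M Q = K t0 t0 - 2 * (sInt Q fun t => K t.1 t0)
        + (sInt Q fun t => sInt Q fun s => K t.1 s.1))
    (Q : SignedMeasure T)
    (hQ : ∀ i, sInt Q (fun t => f t.1 i) = f t0 i) :
    M Qstar ≤ M Q := by
  obtain ⟨CK, hCK⟩ := hKbd
  obtain ⟨Cf, hCf⟩ := hfbd
  let H : T → T → ℝ := fun t s => K t s
  have hHmeas : Measurable (Function.uncurry H) :=
    hKmeas.comp (measurable_subtype_coe.prodMap measurable_subtype_coe)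
  have hHbd : ∃ C, ∀ t s, |H t s| ≤ C := ⟨CK, fun t s => hCK t s⟩
  have hHsymm : ∀ t s, H t s = H s t := fun t s => hKsym t s
  let B := kernelForm H hHmeas hHbd
  let L := sIntₗ (fun t : T => K t t0)
    (integrableFinite_of_bound (hKmeas.of_uncurry_right.comp measurable_subtype_coe) (hCK · t0))
  let F : Fin m → SignedMeasure T →ₗ[ℝ] ℝ := fun i => sIntₗ (fun t : T => f t i)
    (integrableFinite_of_bound ((hfmeas i).comp measurable_subtype_coe) (hCf · i))
  have hBζt0 : ∀ R, B R ζt0 = L R := kernelForm_apply_eq_sInt hHmeas hHbd hHsymm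
    fun s => (hζt0 s).trans (hKsym t0 s)
  have hBζ : ∀ R j, B R (ζ j) = F j R := fun R j =>
    kernelForm_apply_eq_sInt hHmeas hHbd hHsymm (fun s => hζ s j) R
  have horth : B (Q - Qstar) Qstar = L (Q - Qstar) :=
    blup_orthogonality B L F hBζt0 hBζ (fun i j => (hC i j).symm) hCinv
      (fun i => (hQ i).trans (by rw [hc i]; exact (add_sub_cancel _ _).symm)) hQstar
  have hMB : ∀ Q, M Q = K t0 t0 - 2 * L Q + B Q Q := hM
  rw [hMB, hMB]
  have := (kernelForm_isSymm hHmeas hHbd hHsymm).apply_self_sub_two_mul_le L (hKpos _) horth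
  linarith

/-- Proposition 2.1.  If `ζ_{t₀}` solves `∫_T K(t,s) ζ_{t₀}(dt) = K(t₀,s)`,
the vector measure `ζ` solves `∫_T K(t,s) ζ(dt) = f(s)`, and the matrix
`C = ∫_T f ζᵀ` is invertible, then `Q* = ζ_{t₀} + cᵀ C⁻¹ ζ` minimizes the MSE functional
`M(Q) = K(t₀,t₀) − 2∫ K(t,t₀) Q(dt) + ∬ K dQ dQ` among all unbiased `Q`. -/
theorem blup_point_optimality_via_C {d m : ℕ}
    (T : Set (Fin d → ℝ)) (hT : MeasurableSet T)
    (t0 : Fin d → ℝ) (ht0 : t0 ∉ T)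
    (K : (Fin d → ℝ) → (Fin d → ℝ) → ℝ)
    (hKmeas : Measurable (Function.uncurry K))
    (hKbd : ∃ C, ∀ t s, |K t s| ≤ C)
    (hKsym : ∀ t s, K t s = K s t)
    (hKpos : ∀ R : SignedMeasure T, 0 ≤ sInt R fun t => sInt R fun s => K t.1 s.1)
    (f : (Fin d → ℝ) → Fin m → ℝ)
    (hfmeas : ∀ i, Measurable fun t => f t i)
    (hfbd : ∃ C, ∀ t i, |f t i| ≤ C)
    -- the measure `ζ_{t₀}` solving `∫_T K(t,s) ζ_{t₀}(dt) = K(t₀,s)`: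
    (ζt0 : SignedMeasure T)
    (hζt0 : ∀ s : T, sInt ζt0 (fun t => K t.1 s.1) = K t0 s.1)
    -- the vector measure `ζ` solving `∫_T K(t,s) ζ(dt) = f(s)` componentwise:
    (ζ : Fin m → SignedMeasure T)
    (hζ : ∀ (s : T) (j : Fin m), sInt (ζ j) (fun t => K t.1 s.1) = f s.1 j)
    -- the matrix `C` with entries `C_{ij} = ∫_T f_i dζ_j`, assumed invertible:
    (C : Matrix (Fin m) (Fin m) ℝ)
    (hC : ∀ i j, C i j = sInt (ζ j) fun t => f t.1 i)
    (hCinv : IsUnit C.det)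
    (c : Fin m → ℝ)
    (hc : ∀ i, c i = f t0 i - sInt ζt0 fun t => f t.1 i)
    (Qstar : SignedMeasure T)
    (hQstar : Qstar = ζt0 + ∑ j, (∑ i, c i * C⁻¹ i j) • ζ j)
    (M : SignedMeasure T → ℝ)
    (hM : ∀ Q : SignedMeasure T,
      M Q = K t0 t0 - 2 * (sInt Q fun t => K t.1 t0)
        + (sInt Q fun t => sInt Q fun s => K t.1 s.1))
    (Q : SignedMeasure T)
    (hQ : ∀ i, sInt Q (fun t => f t.1 i) = f t0 i) :
    M Qstar ≤ M Q :=
  blup_point_optimality_via_C_general T t0 K hKmeas hKbd hKsym hKpos f hfmeas hfbd ζt0 hζt0 ζ hζ C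
    hC hCinv c hc Qstar hQstar M hM Q hQ
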